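/- arXiv:1611.09181 — 4 statements merged into one kernel-verified Lean document; each statement's English description precedes it below -/
import Mathlib

section
/- Define T(n) = ∑_{k=0}^{⌊n/2⌋} B(n−k, k). Then for every p ≥ 1, T(2p) = T(2p−1) + F_{2p+1}. -/
/-- Bernoulli's triangle: the partial sums of binomial coefficients. -/
def bernoulli2 (n k : ℕ) : ℕ := ∑ q ∈ Finset.range (k + 1), n.choose q

/-- The sum over the path following direction (-1,-1) from (n,0) in Bernoulli's triangle. -/
def T2 (n : ℕ) : ℕ := ∑ k ∈ Finset.range (n / 2 + 1), bernoulli2 (n - k) k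

lemma bern_rec (n k : ℕ) : bernoulli2 (n+1) (k+1) = bernoulli2 n (k+1) + bernoulli2 n k := by
  unfold bernoulli2
  rw [Finset.sum_range_succ' (fun q => (n+1).choose q),
      Finset.sum_range_succ' (fun q => n.choose q)]
  simp [Nat.choose_succ_succ, Finset.sum_add_distrib]
  ring

lemma bern_zero (n : ℕ) : bernoulli2 n 0 = 1 := by simp [bernoulli2]

lemma bern_top (p : ℕ) : bernoulli2 p (p+1) = 2^p := by
  unfold bernoulli2
  rw [Finset.sum_range_succ, Nat.choose_eq_zero_of_lt (by omega), Nat.sum_range_choose]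
  ring

lemma recA (p : ℕ) : T2 (2*p+2) = T2 (2*p+1) + 2^p + T2 (2*p) := by
  have h2 : (2*p+2)/2 = p+1 := by omega
  have h1 : (2*p+1)/2 = p := by omega
  have h0 : (2*p)/2 = p := by omega
  unfold T2
  rw [h2, h1, h0]
  rw [Finset.sum_range_succ' (fun k => bernoulli2 (2*p+2-k) k)]
  have key : ∀ k ∈ Finset.range (p+1), bernoulli2 (2*p+2-(k+1)) (k+1)
      = bernoulli2 (2*p-k) (k+1) + bernoulli2 (2*p-k) k := by
    intro k hk
    simp only [Finset.mem_range] at hk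
    have e : 2*p+2-(k+1) = (2*p-k)+1 := by omega
    rw [e, bern_rec]
  rw [Finset.sum_congr rfl key, Finset.sum_add_distrib]
  rw [Finset.sum_range_succ (fun k => bernoulli2 (2*p-k) (k+1))]
  rw [Finset.sum_range_succ' (fun k => bernoulli2 (2*p+1-k) k)]
  have e1 : ∀ k, 2*p+1-(k+1) = 2*p-k := fun k => by omega
  simp only [e1]
  have e2 : 2*p-p = p := by omega
  rw [e2, bern_top, bern_zero, bern_zero]
  ring

lemma recB (p : ℕ) : T2 (2*p+3) = T2 (2*p+2) + T2 (2*p+1) := by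
  have h3 : (2*p+3)/2 = p+1 := by omega
  have h2 : (2*p+2)/2 = p+1 := by omega
  have h1 : (2*p+1)/2 = p := by omega
  unfold T2
  rw [h3, h2, h1]
  rw [Finset.sum_range_succ' (fun k => bernoulli2 (2*p+3-k) k)]
  have key : ∀ k ∈ Finset.range (p+1), bernoulli2 (2*p+3-(k+1)) (k+1)
      = bernoulli2 (2*p+1-k) (k+1) + bernoulli2 (2*p+1-k) k := by
    intro k hk
    simp only [Finset.mem_range] at hk
    have e : 2*p+3-(k+1) = (2*p+1-k)+1 := by omega
    rw [e, bern_rec]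
  rw [Finset.sum_congr rfl key, Finset.sum_add_distrib]
  rw [Finset.sum_range_succ' (fun k => bernoulli2 (2*p+2-k) k)]
  have e1 : ∀ k, 2*p+2-(k+1) = 2*p+1-k := fun k => by omega
  simp only [e1]
  rw [bern_zero, bern_zero]
  ring

lemma closed (p : ℕ) : T2 (2*p) + 2^p = Nat.fib (2*p+3) ∧
    T2 (2*p+1) + 2^(p+1) = Nat.fib (2*p+4) := by
  induction p with
  | zero => constructor <;> decide
  | succ p ih =>
    obtain ⟨ih1, ih2⟩ := ih
    have hA := recA p
    have hB := recB p
    have hf1 : Nat.fib (2*p+5) = Nat.fib (2*p+3) + Nat.fib (2*p+4) := by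
      rw [show 2*p+5 = (2*p+3)+2 from by ring, Nat.fib_add_two,
          show (2*p+3)+1 = 2*p+4 from by ring]
    have hf2 : Nat.fib (2*p+6) = Nat.fib (2*p+4) + Nat.fib (2*p+5) := by
      rw [show 2*p+6 = (2*p+4)+2 from by ring, Nat.fib_add_two,
          show (2*p+4)+1 = 2*p+5 from by ring]
    have hp1 : (2:ℕ)^(p+1) = 2 * 2^p := by ring
    have hp2 : (2:ℕ)^(p+2) = 4 * 2^p := by ring
    constructor
    · rw [show 2*(p+1)+3 = 2*p+5 from by ring, show 2*(p+1) = 2*p+2 from by ring]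
      omega
    · rw [show 2*(p+1)+4 = 2*p+6 from by ring, show 2*(p+1)+1 = 2*p+3 from by ring,
          show p+1+1 = p+2 from by ring]
      omega

theorem T2_even (p : ℕ) (hp : 1 ≤ p) :
    T2 (2 * p) = T2 (2 * p - 1) + Nat.fib (2 * p + 1) := by
  obtain ⟨q, rfl⟩ := Nat.exists_eq_add_of_le hp
  rw [show 2*(1+q)+1 = 2*q+3 from by ring, show 2*(1+q)-1 = 2*q+1 from by omega,
      show 2*(1+q) = 2*q+2 from by ring]
  have h1 := (closed (q+1)).1
  have h2 := (closed q).2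
  rw [show 2*(q+1) = 2*q+2 from by ring, show 2*q+2+3 = 2*q+5 from by ring] at h1
  have hf1 : Nat.fib (2*q+5) = Nat.fib (2*q+3) + Nat.fib (2*q+4) := by
    rw [show 2*q+5 = (2*q+3)+2 from by ring, Nat.fib_add_two,
        show (2*q+3)+1 = 2*q+4 from by ring]
  have hp1 : (2:ℕ)^(q+1) = 2 * 2^q := by ring
  omega
end

section
/- Define S̄(n) = B^[3](n,n) − ∑_{k=1}^{⌊n/2⌋} B^[3](n−k, n−2k), as an integer. Then for every n ≥ 0, S̄(n) = 3·2^n − F_{n+3}. -/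
/-- Bernoulli's m-th order triangle: `bern 1 = binom`, and
`bern (m+1) n k = ∑_{q=0}^{k} bern m n q` (the value at `m = 0` is irrelevant). -/
def bern : ℕ → ℕ → ℕ → ℕ
  | 0, n, k => n.choose k
  | 1, n, k => n.choose k
  | m + 2, n, k => ∑ q ∈ Finset.range (k + 1), bern (m + 1) n q

/-- The sum over the path following direction (-1,-1) from (n,0) in the m-th order triangle. -/
def T (m n : ℕ) : ℕ := ∑ k ∈ Finset.range (n / 2 + 1), bern m (n - k) k

/-- S̄_n for the path following direction (2,-1) from (n,n) in the third-order triangle. -/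
def Sbar3 (n : ℕ) : ℤ :=
  (bern 3 n n : ℤ) - ∑ k ∈ Finset.Icc 1 (n / 2), (bern 3 (n - k) (n - 2 * k) : ℤ)

lemma bern2_def (n k : ℕ) : bern 2 n k = ∑ q ∈ Finset.range (k+1), n.choose q := by
  simp [bern]

lemma bern3_def (n k : ℕ) : bern 3 n k = ∑ q ∈ Finset.range (k+1), bern 2 n q := by
  simp [bern]

lemma bern2_succ (n k : ℕ) : bern 2 n (k+1) = bern 2 n k + n.choose (k+1) := by
  simp [bern2_def, Finset.sum_range_succ]

lemma bern3_succ (n k : ℕ) : bern 3 n (k+1) = bern 3 n k + bern 2 n (k+1) := by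
  simp [bern3_def, Finset.sum_range_succ]

lemma bern2_pascal (n k : ℕ) : bern 2 (n+1) (k+1) = bern 2 n (k+1) + bern 2 n k := by
  induction k with
  | zero => simp [bern2_def, Finset.sum_range_succ]; omega
  | succ k ih =>
      rw [bern2_succ (n+1) (k+1), ih, bern2_succ n (k+1)]
      have hch : (n+1).choose (k+1+1) = n.choose (k+1) + n.choose (k+1+1) :=
        Nat.choose_succ_succ _ _
      have h0 := bern2_succ n k
      omega

lemma bern3_pascal (n k : ℕ) : bern 3 (n+1) (k+1) = bern 3 n (k+1) + bern 3 n k := by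
  induction k with
  | zero => simp [bern3_def, Finset.sum_range_succ, bern2_def, Nat.choose]; omega
  | succ k ih =>
      rw [bern3_succ (n+1) (k+1), ih, bern3_succ n (k+1), bern2_pascal n (k+1)]
      have h0 := bern3_succ n k
      omega

lemma bern3_zero (m : ℕ) : bern 3 m 0 = 1 := by
  simp [bern3_def, bern2_def]

lemma bern2_self (n : ℕ) : bern 2 n n = 2 ^ n := by
  simp [bern2_def, Nat.sum_range_choose]

lemma bern3_succ_self (n : ℕ) : bern 3 n (n+1) = bern 3 n n + 2 ^ n := by
  rw [bern3_succ, bern2_succ, bern2_self, Nat.choose_succ_self]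
  omega

lemma bern3_diag (n : ℕ) : bern 3 (n+1) (n+1) = 2 * bern 3 n n + 2 ^ n := by
  rw [bern3_pascal, bern3_succ_self]; ring

/-- The full path sum including `k = 0`. -/
def U (n : ℕ) : ℕ := ∑ k ∈ Finset.range (n / 2 + 1), bern 3 (n - k) (n - 2 * k)

lemma U_rec (n : ℕ) : U (n+2) = U (n+1) + U n + bern 3 (n+1) (n+1) + 2 ^ (n+1) := by
  rcases Nat.even_or_odd n with ⟨K, hK⟩ | ⟨K, hK⟩
  · -- n = K + K
    subst hK
    have h1 : (K+K+2)/2 = K+1 := by omega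
    have h2 : (K+K+1)/2 = K := by omega
    have h3 : (K+K)/2 = K := by omega
    have hsplit : ∑ k ∈ Finset.range (K+1), bern 3 (K+K+2 - k) (K+K+2 - 2*k)
        = (∑ k ∈ Finset.range (K+1), bern 3 (K+K+1 - k) (K+K+2 - 2*k))
          + ∑ k ∈ Finset.range (K+1), bern 3 (K+K+1 - k) (K+K+1 - 2*k) := by
      rw [← Finset.sum_add_distrib]
      refine Finset.sum_congr rfl (fun k hk => ?_)
      have hkK : k ≤ K := by simpa [Nat.lt_succ_iff] using hk
      have e1 : K+K+2 - k = (K+K+1 - k) + 1 := by omega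
      have e2 : K+K+2 - 2*k = (K+K+1 - 2*k) + 1 := by omega
      rw [e1, e2, bern3_pascal, ← e2]
    have hfirst : ∑ k ∈ Finset.range (K+1), bern 3 (K+K+1 - k) (K+K+2 - 2*k)
        = (∑ j ∈ Finset.range K, bern 3 (K+K - j) (K+K - 2*j))
          + (bern 3 (K+K+1) (K+K+1) + 2^(K+K+1)) := by
      rw [Finset.sum_range_succ']
      congr 1
      · refine Finset.sum_congr rfl (fun j hj => ?_)
        have e1 : K+K+1 - (j+1) = K+K - j := by omega
        have e2 : K+K+2 - 2*(j+1) = K+K - 2*j := by omega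
        rw [e1, e2]
      · simp only [Nat.sub_zero, Nat.mul_zero]
        rw [show K+K+2 = (K+K+1)+1 by omega, bern3_succ_self]
    have hC : ∑ k ∈ Finset.range (K+1), bern 3 (K+K - k) (K+K - 2*k)
        = (∑ j ∈ Finset.range K, bern 3 (K+K - j) (K+K - 2*j)) + 1 := by
      rw [Finset.sum_range_succ]
      have e1 : K+K - K = K := by omega
      have e2 : K+K - 2*K = 0 := by omega
      rw [e1, e2, bern3_zero]
    have hA : U (K+K+2)
        = (∑ k ∈ Finset.range (K+1), bern 3 (K+K+2 - k) (K+K+2 - 2*k)) + 1 := by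
      rw [U, h1, Finset.sum_range_succ]
      have e1 : K+K+2 - (K+1) = K+1 := by omega
      have e2 : K+K+2 - 2*(K+1) = 0 := by omega
      rw [e1, e2, bern3_zero]
    have hB : U (K+K+1) = ∑ k ∈ Finset.range (K+1), bern 3 (K+K+1 - k) (K+K+1 - 2*k) := by
      rw [U, h2]
    have hD : U (K+K) = ∑ k ∈ Finset.range (K+1), bern 3 (K+K - k) (K+K - 2*k) := by
      rw [U, h3]
    rw [hA, hB, hD, hC, hsplit, hfirst]
    omega
  · -- n = 2K+1
    subst hK
    have h1 : (2*K+1+2)/2 = K+1 := by omega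
    have h2 : (2*K+1+1)/2 = K+1 := by omega
    have h3 : (2*K+1)/2 = K := by omega
    have hsplit : ∑ k ∈ Finset.range (K+1+1), bern 3 (2*K+1+2 - k) (2*K+1+2 - 2*k)
        = (∑ k ∈ Finset.range (K+1+1), bern 3 (2*K+1+1 - k) (2*K+1+2 - 2*k))
          + ∑ k ∈ Finset.range (K+1+1), bern 3 (2*K+1+1 - k) (2*K+1+1 - 2*k) := by
      rw [← Finset.sum_add_distrib]
      refine Finset.sum_congr rfl (fun k hk => ?_)
      have hkK : k ≤ K+1 := by simpa [Nat.lt_succ_iff] using hk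
      have e1 : 2*K+1+2 - k = (2*K+1+1 - k) + 1 := by omega
      have e2 : 2*K+1+2 - 2*k = (2*K+1+1 - 2*k) + 1 := by omega
      rw [e1, e2, bern3_pascal, ← e2]
    have hfirst : ∑ k ∈ Finset.range (K+1+1), bern 3 (2*K+1+1 - k) (2*K+1+2 - 2*k)
        = (∑ j ∈ Finset.range (K+1), bern 3 (2*K+1 - j) (2*K+1 - 2*j))
          + (bern 3 (2*K+1+1) (2*K+1+1) + 2^(2*K+1+1)) := by
      rw [Finset.sum_range_succ']
      congr 1
      · refine Finset.sum_congr rfl (fun j hj => ?_)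
        have e1 : 2*K+1+1 - (j+1) = 2*K+1 - j := by omega
        have e2 : 2*K+1+2 - 2*(j+1) = 2*K+1 - 2*j := by omega
        rw [e1, e2]
      · simp only [Nat.sub_zero, Nat.mul_zero]
        rw [show 2*K+1+2 = (2*K+1+1)+1 by omega, bern3_succ_self]
    have hA : U (2*K+1+2) = ∑ k ∈ Finset.range (K+1+1), bern 3 (2*K+1+2 - k) (2*K+1+2 - 2*k) := by
      rw [U, h1]
    have hB : U (2*K+1+1) = ∑ k ∈ Finset.range (K+1+1), bern 3 (2*K+1+1 - k) (2*K+1+1 - 2*k) := by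
      rw [U, h2]
    have hC : U (2*K+1) = ∑ k ∈ Finset.range (K+1), bern 3 (2*K+1 - k) (2*K+1 - 2*k) := by
      rw [U, h3]
    rw [hA, hB, hC, hsplit, hfirst]
    ring

lemma bern3_closed (n : ℕ) : 2 * bern 3 n n = (n + 2) * 2 ^ n := by
  induction n with
  | zero => simp [bern3_zero]
  | succ n ih =>
      calc 2 * bern 3 (n+1) (n+1) = 2*(2*bern 3 n n) + 2*2^n := by rw [bern3_diag]; ring
        _ = 2*((n+2)*2^n) + 2*2^n := by rw [ih]
        _ = (n+1+2) * 2^(n+1) := by ring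

lemma U_closed (n : ℕ) : 2 * (U n : ℤ) = (2 * n - 2) * 2 ^ n + 2 * Nat.fib (n + 3) := by
  induction n using Nat.twoStepInduction with
  | zero =>
      have h : U 0 = 1 := by simp [U, bern3_zero]
      rw [h]; norm_num [Nat.fib]
  | one =>
      have h : U 1 = 3 := by
        simp [U, bern3_def, bern2_def, Finset.sum_range_succ, Nat.choose]
      rw [h]; norm_num [show (1:ℕ)+3 = 4 by rfl, Nat.fib]
  | more n ih2 ih1 =>
      have hr := U_rec n
      have hb := bern3_closed (n+1)
      have hf : Nat.fib (n + 5) = Nat.fib (n+4) + Nat.fib (n+3) := by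
        rw [show n+5 = (n+3)+2 by ring, Nat.fib_add_two]; ring
      have hrz : (U (n+2) : ℤ) = U (n+1) + U n + bern 3 (n+1) (n+1) + 2 ^ (n+1) := by
        exact_mod_cast congrArg (Nat.cast : ℕ → ℤ) hr
      have hbz : 2 * (bern 3 (n+1) (n+1) : ℤ) = ((n:ℤ) + 3) * 2 ^ (n+1) := by
        exact_mod_cast congrArg (Nat.cast : ℕ → ℤ) hb
      have hfz : (Nat.fib (n+5) : ℤ) = Nat.fib (n+4) + Nat.fib (n+3) := by
        exact_mod_cast congrArg (Nat.cast : ℕ → ℤ) hf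
      rw [show n+1+3 = n+4 by omega] at ih1
      rw [show n+2+3 = n+5 by omega]
      push_cast at ih1 ih2 ⊢
      linear_combination 2*hrz + ih1 + ih2 + hbz - 2*hfz

lemma Sbar3_eq (n : ℕ) : Sbar3 n = 2 * (bern 3 n n : ℤ) - U n := by
  rw [Sbar3, U]
  have h : Finset.range (n/2 + 1) = insert 0 (Finset.Icc 1 (n/2)) := by
    ext x; simp [Finset.mem_range, Finset.mem_Icc]; omega
  rw [h, Finset.sum_insert (by simp)]
  push_cast
  simp only [Nat.sub_zero, Nat.mul_zero]
  ring

theorem Sbar3_explicit (n : ℕ) :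
    Sbar3 n = 3 * 2 ^ n - (Nat.fib (n + 3) : ℤ) := by
  have h1 := Sbar3_eq n
  have h2 := U_closed n
  have h3 := bern3_closed n
  have h3z : 2 * (bern 3 n n : ℤ) = ((n:ℤ) + 2) * 2 ^ n := by
    exact_mod_cast congrArg (Nat.cast : ℕ → ℤ) h3
  push_cast at h2
  linarith
end

section
/- For every n ≥ 0, ∑_{k=0}^{⌊n/2⌋} ∑_{q=0}^{n−2k} ∑_{r=0}^{q} binom(n−k, r) = F_{n+3} + (n−1)·2^n, as an identity of integers. -/
open Finset

private def gg (N q : ℕ) : ℤ := ∑ r ∈ range (q + 1), (N.choose r : ℤ)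

private def TT (N m : ℕ) : ℤ := ∑ q ∈ range (m + 1), gg N q

private lemma gg_succ (N q : ℕ) : gg (N + 1) q = 2 * gg N q - (N.choose q : ℤ) := by
  induction q with
  | zero => simp [gg]
  | succ q ih =>
    have h1 : gg (N + 1) (q + 1) = gg (N + 1) q + ((N + 1).choose (q + 1) : ℤ) := by
      simp [gg, Finset.sum_range_succ]
    have h2 : gg N (q + 1) = gg N q + (N.choose (q + 1) : ℤ) := by
      simp [gg, Finset.sum_range_succ]
    rw [h1, ih, h2, Nat.choose_succ_succ]
    push_cast
    ring

private lemma TT_succ (N m : ℕ) : TT (N + 1) m = 2 * TT N m - gg N m := by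
  have h : TT (N + 1) m = ∑ q ∈ range (m + 1), (2 * gg N q - (N.choose q : ℤ)) :=
    Finset.sum_congr rfl fun q _ => gg_succ N q
  rw [h, Finset.sum_sub_distrib, ← Finset.mul_sum]
  rfl

private lemma gg_self (N : ℕ) : gg N N = 2 ^ N := by
  unfold gg
  rw [← Nat.cast_sum, Nat.sum_range_choose]
  push_cast
  ring

private lemma TT_diag (N : ℕ) : 2 * TT N N = ((N : ℤ) + 2) * 2 ^ N := by
  induction N with
  | zero => simp [TT, gg]
  | succ N ih =>
    have h1 : TT (N + 1) (N + 1) = TT (N + 1) N + gg (N + 1) (N + 1) := by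
      simp [TT, Finset.sum_range_succ]
    rw [h1, TT_succ, gg_self, gg_self]
    push_cast
    linear_combination 2 * ih

private lemma TT_diag' (N : ℕ) : TT (N + 1) (N + 1) = ((N : ℤ) + 3) * 2 ^ N := by
  have h := TT_diag (N + 1)
  apply mul_left_cancel₀ (two_ne_zero : (2 : ℤ) ≠ 0)
  rw [h]
  push_cast
  ring

private lemma fib_diag (n : ℕ) :
    ∑ k ∈ range (n + 1), (n - k).choose k = Nat.fib (n + 1) := by
  induction n using Nat.twoStepInduction with
  | zero => decide
  | one => decide
  | more n ih1 ih2 =>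
    have e0 : ∑ k ∈ range (n + 3), (n + 2 - k).choose k
        = (∑ k ∈ range (n + 2), (n + 1 - k).choose (k + 1)) + 1 := by
      rw [Finset.sum_range_succ']
      simp [Nat.succ_sub_succ]
    have e1 : ∑ k ∈ range (n + 2), (n + 1 - k).choose (k + 1)
        = ∑ k ∈ range (n + 2), ((n - k).choose k + (n - k).choose (k + 1)) := by
      apply Finset.sum_congr rfl
      intro k hk
      rcases le_or_gt k n with h | h
      · have hx : n + 1 - k = (n - k) + 1 := by omega
        rw [hx, Nat.choose_succ_succ]
      · have hk2 : k = n + 1 := by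
          have := Finset.mem_range.1 hk; omega
        subst hk2
        have h1 : n + 1 - (n + 1) = 0 := by omega
        have h2 : n - (n + 1) = 0 := by omega
        rw [h1, h2]
        simp
    have e2 : ∑ k ∈ range (n + 2), (n - k).choose k = ∑ k ∈ range (n + 1), (n - k).choose k := by
      rw [Finset.sum_range_succ, Nat.choose_eq_zero_of_lt (by omega), add_zero]
    have e3 : (∑ k ∈ range (n + 2), (n - k).choose (k + 1)) + 1
        = ∑ k ∈ range (n + 2), (n + 1 - k).choose k := by
      conv_rhs => rw [Finset.sum_range_succ']
      rw [Finset.sum_range_succ, Nat.choose_eq_zero_of_lt (by omega)]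
      simp [Nat.succ_sub_succ]
    have hf : Nat.fib (n + 2 + 1) = Nat.fib (n + 1) + Nat.fib (n + 2) := Nat.fib_add_two
    rw [e0, e1, Finset.sum_add_distrib, e2, ih1]
    have ih2' : ∑ k ∈ range (n + 2), (n + 1 - k).choose k = Nat.fib (n + 2) := ih2
    rw [ih2'] at e3
    omega
private lemma fib_diag' (n : ℕ) :
    ∑ k ∈ range (n / 2 + 1), ((n - k).choose k : ℤ) = (Nat.fib (n + 1) : ℤ) := by
  have hsub : range (n / 2 + 1) ⊆ range (n + 1) := Finset.range_subset_range.2 (by omega)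
  have h : ∑ k ∈ range (n + 1), ((n - k).choose k : ℤ)
      = ∑ k ∈ range (n / 2 + 1), ((n - k).choose k : ℤ) := by
    apply (Finset.sum_subset hsub ?_).symm
    intro k hk hk2
    have h1 : k < n + 1 := Finset.mem_range.1 hk
    have h2 : ¬ k < n / 2 + 1 := fun h => hk2 (Finset.mem_range.2 h)
    have : n - k < k := by omega
    rw [Nat.choose_eq_zero_of_lt this, Nat.cast_zero]
  rw [← h, ← Nat.cast_sum, fib_diag]

private lemma UU_eq (n : ℕ) :
    ∑ k ∈ range (n / 2 + 1), gg (n - k) (n - 2 * k)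
      = 2 ^ (n + 1) - (Nat.fib (n + 2) : ℤ) := by
  induction n using Nat.twoStepInduction with
  | zero => simp [gg]
  | one => norm_num [gg, Finset.sum_range_succ]
  | more n ih1 ih2 =>
    have hdiv : (n + 2) / 2 + 1 = (n / 2 + 1) + 1 := by omega
    have step : ∑ k ∈ range ((n + 2) / 2 + 1), gg (n + 2 - k) (n + 2 - 2 * k)
        = (∑ k ∈ range (n / 2 + 1), (2 * gg (n - k) (n - 2 * k) - ((n - k).choose k : ℤ)))
          + 2 ^ (n + 2) := by
      rw [hdiv, Finset.sum_range_succ']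
      congr 1
      · apply Finset.sum_congr rfl
        intro k hk
        have hk' : k ≤ n / 2 := by
          have := Finset.mem_range.1 hk; omega
        have h1 : n + 2 - (k + 1) = (n - k) + 1 := by omega
        have h2 : n + 2 - 2 * (k + 1) = n - 2 * k := by omega
        rw [h1, h2, gg_succ]
        have h3 : n - 2 * k = (n - k) - k := by omega
        have h4 : k ≤ n - k := by omega
        rw [h3, Nat.choose_symm h4]
      · simpa using gg_self (n + 2)
    rw [step, Finset.sum_sub_distrib, ← Finset.mul_sum, ih1, fib_diag']
    have hf1 : Nat.fib (n + 4) = Nat.fib (n + 2) + Nat.fib (n + 3) := Nat.fib_add_two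
    have hf2 : Nat.fib (n + 3) = Nat.fib (n + 1) + Nat.fib (n + 2) := Nat.fib_add_two
    have hf1' : (Nat.fib (n + 4) : ℤ) = Nat.fib (n + 2) + Nat.fib (n + 3) := by exact_mod_cast hf1
    have hf2' : (Nat.fib (n + 3) : ℤ) = Nat.fib (n + 1) + Nat.fib (n + 2) := by exact_mod_cast hf2
    rw [hf1', hf2']
    ring

theorem theoremS3 (n : ℕ) :
    (∑ k ∈ Finset.range (n / 2 + 1), ∑ q ∈ Finset.range (n - 2 * k + 1),
        ∑ r ∈ Finset.range (q + 1), ((n - k).choose r : ℤ)) =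
      (Nat.fib (n + 3) : ℤ) + ((n : ℤ) - 1) * 2 ^ n := by
  show ∑ k ∈ range (n / 2 + 1), TT (n - k) (n - 2 * k)
      = (Nat.fib (n + 3) : ℤ) + ((n : ℤ) - 1) * 2 ^ n
  induction n using Nat.twoStepInduction with
  | zero => norm_num [TT, gg, Finset.sum_range_succ]
  | one => norm_num [TT, gg, Finset.sum_range_succ]
  | more n ih1 ih2 =>
    have hdiv : (n + 2) / 2 + 1 = (n / 2 + 1) + 1 := by omega
    have step : ∑ k ∈ range ((n + 2) / 2 + 1), TT (n + 2 - k) (n + 2 - 2 * k)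
        = (∑ k ∈ range (n / 2 + 1), (2 * TT (n - k) (n - 2 * k) - gg (n - k) (n - 2 * k)))
          + TT (n + 2) (n + 2) := by
      rw [hdiv, Finset.sum_range_succ']
      congr 1
      apply Finset.sum_congr rfl
      intro k hk
      have h1 : n + 2 - (k + 1) = (n - k) + 1 := by
        have := Finset.mem_range.1 hk; omega
      have h2 : n + 2 - 2 * (k + 1) = n - 2 * k := by omega
      rw [h1, h2, TT_succ]
    rw [step, Finset.sum_sub_distrib, ← Finset.mul_sum, ih1, UU_eq, TT_diag' (n + 1)]
    have hf1 : (Nat.fib (n + 5) : ℤ) = Nat.fib (n + 3) + Nat.fib (n + 4) := by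
      exact_mod_cast (Nat.fib_add_two (n := n + 3))
    have hf2 : (Nat.fib (n + 4) : ℤ) = Nat.fib (n + 2) + Nat.fib (n + 3) := by
      exact_mod_cast (Nat.fib_add_two (n := n + 2))
    rw [hf1, hf2]
    push_cast
    ring
end

section
/- For every m ≥ 1 there exist polynomials Q, R with rational coefficients, with deg Q ≤ max(m−2, 0) and deg R ≤ max(m−3, 0), such that for every n ≥ 0, T^[m](n) = F_{n+2m−1} − 2^p·(Q(p) + (−1)^n·R(p)) in ℚ, where p = ⌊(n+1)/2⌋. -/
open Finset Polynomial

lemma bern_k0 (m n : ℕ) : bern m n 0 = 1 := by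
  induction m with
  | zero => simp [bern]
  | succ m ih =>
    match m with
    | 0 => simp [bern]
    | k + 1 => simp [bern, ih]

lemma bern_def2 (m n k : ℕ) :
    bern (m + 2) n k = ∑ q ∈ Finset.range (k + 1), bern (m + 1) n q := rfl

lemma bern_col (m n k : ℕ) :
    bern (m + 2) n (k + 1) = bern (m + 2) n k + bern (m + 1) n (k + 1) := by
  show (∑ q ∈ Finset.range (k + 1 + 1), bern (m + 1) n q) = _
  rw [Finset.sum_range_succ]
  rfl

lemma bern_pascal (m n k : ℕ) :
    bern m (n + 1) (k + 1) = bern m n k + bern m n (k + 1) := by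
  induction m generalizing k with
  | zero => exact Nat.choose_succ_succ n k
  | succ m ih =>
    match m with
    | 0 => exact Nat.choose_succ_succ n k
    | j + 1 =>
      rw [bern_def2, Finset.sum_range_succ', Finset.sum_congr rfl (fun q _ => ih q)]
      have h0 : bern (j + 1) (n + 1) 0 = bern (j + 1) n 0 := by rw [bern_k0, bern_k0]
      rw [h0, Finset.sum_add_distrib]
      have h2 : (∑ q ∈ Finset.range (k + 1), bern (j + 1) n (q + 1)) + bern (j + 1) n 0
          = bern (j + 2) n (k + 1) := by
        rw [← Finset.sum_range_succ', ← bern_def2]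
      have h3 : (∑ q ∈ Finset.range (k + 1), bern (j + 1) n q) = bern (j + 2) n k := by
        rw [← bern_def2]
      rw [Nat.add_assoc, h2, h3]

lemma T_as_sum (m n s : ℕ) (h : n / 2 + 1 = s) :
    T m n = ∑ k ∈ Finset.range s, bern m (n - k) k := by
  rw [T, h]

lemma T_zero (m : ℕ) : T m 0 = 1 := by
  rw [T_as_sum m 0 1 rfl, Finset.sum_range_one, bern_k0]

lemma T_one (m : ℕ) : T m 1 = 1 := by
  rw [T_as_sum m 1 1 rfl, Finset.sum_range_one, bern_k0]

lemma T_even (m t : ℕ) : T m (2*t+2) = T m (2*t+1) + T m (2*t) + bern m t (t+1) := by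
  have e2 : T m (2*t+2) = ∑ k ∈ Finset.range (t+2), bern m (2*t+2-k) k :=
    T_as_sum _ _ _ (by omega)
  have e1 : T m (2*t+1) = ∑ k ∈ Finset.range (t+1), bern m (2*t+1-k) k :=
    T_as_sum _ _ _ (by omega)
  have e0 : T m (2*t) = ∑ k ∈ Finset.range (t+1), bern m (2*t-k) k :=
    T_as_sum _ _ _ (by omega)
  have h2 : ∑ k ∈ Finset.range (t+2), bern m (2*t+2-k) k
      = (∑ k ∈ Finset.range (t+1), (bern m (2*t-k) k + bern m (2*t-k) (k+1))) + 1 := by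
    rw [Finset.sum_range_succ' (fun k => bern m (2*t+2-k) k), bern_k0]
    congr 1
    refine Finset.sum_congr rfl (fun k hk => ?_)
    rw [Finset.mem_range] at hk
    rw [show 2*t+2-(k+1) = (2*t-k)+1 by omega, bern_pascal]
  have h1 : (∑ k ∈ Finset.range (t+1), bern m (2*t+1-k) k) + bern m t (t+1)
      = (∑ k ∈ Finset.range (t+1), bern m (2*t-k) (k+1)) + 1 := by
    have a1 : ∑ k ∈ Finset.range (t+2), bern m (2*t+1-k) k
        = (∑ k ∈ Finset.range (t+1), bern m (2*t+1-(k+1)) (k+1)) + bern m (2*t+1) 0 :=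
      Finset.sum_range_succ' _ _
    rw [Finset.sum_range_succ (fun k => bern m (2*t+1-k) k), bern_k0,
      show 2*t+1-(t+1) = t by omega] at a1
    have a2 : ∑ k ∈ Finset.range (t+1), bern m (2*t+1-(k+1)) (k+1)
        = ∑ k ∈ Finset.range (t+1), bern m (2*t-k) (k+1) :=
      Finset.sum_congr rfl (fun k hk => by
        rw [show 2*t+1-(k+1) = 2*t-k by omega])
    rw [a2] at a1
    omega
  rw [e2, e1, e0, h2, Finset.sum_add_distrib]
  omega

lemma T_odd (m t : ℕ) : T m (2*t+3) = T m (2*t+2) + T m (2*t+1) := by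
  have e3 : T m (2*t+3) = ∑ k ∈ Finset.range (t+2), bern m (2*t+3-k) k :=
    T_as_sum _ _ _ (by omega)
  have e2 : T m (2*t+2) = ∑ k ∈ Finset.range (t+2), bern m (2*t+2-k) k :=
    T_as_sum _ _ _ (by omega)
  have e1 : T m (2*t+1) = ∑ k ∈ Finset.range (t+1), bern m (2*t+1-k) k :=
    T_as_sum _ _ _ (by omega)
  have h3 : ∑ k ∈ Finset.range (t+2), bern m (2*t+3-k) k
      = (∑ k ∈ Finset.range (t+1), (bern m (2*t+1-k) k + bern m (2*t+1-k) (k+1))) + 1 := by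
    rw [Finset.sum_range_succ' (fun k => bern m (2*t+3-k) k), bern_k0]
    congr 1
    refine Finset.sum_congr rfl (fun k hk => ?_)
    rw [Finset.mem_range] at hk
    rw [show 2*t+3-(k+1) = (2*t+1-k)+1 by omega, bern_pascal]
  have h2 : ∑ k ∈ Finset.range (t+2), bern m (2*t+2-k) k
      = (∑ k ∈ Finset.range (t+1), bern m (2*t+1-k) (k+1)) + 1 := by
    rw [Finset.sum_range_succ' (fun k => bern m (2*t+2-k) k), bern_k0]
    congr 1
    exact Finset.sum_congr rfl (fun k hk => by
      rw [Finset.mem_range] at hk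
      rw [show 2*t+2-(k+1) = 2*t+1-k by omega])
  rw [e3, e2, e1, h3, Finset.sum_add_distrib]
  omega

lemma T_cross_even (M t : ℕ) :
    T (M+2) (2*t+2) = T (M+1) (2*t+2) + T (M+2) (2*t+1) := by
  have e2 : T (M+2) (2*t+2) = ∑ k ∈ Finset.range (t+2), bern (M+2) (2*t+2-k) k :=
    T_as_sum _ _ _ (by omega)
  have e1 : T (M+2) (2*t+1) = ∑ k ∈ Finset.range (t+1), bern (M+2) (2*t+1-k) k :=
    T_as_sum _ _ _ (by omega)
  have f2 : T (M+1) (2*t+2) = ∑ k ∈ Finset.range (t+2), bern (M+1) (2*t+2-k) k :=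
    T_as_sum _ _ _ (by omega)
  have h2 : ∑ k ∈ Finset.range (t+2), bern (M+2) (2*t+2-k) k
      = (∑ k ∈ Finset.range (t+1),
          (bern (M+2) (2*t+1-k) k + bern (M+1) (2*t+1-k) (k+1))) + 1 := by
    rw [Finset.sum_range_succ' (fun k => bern (M+2) (2*t+2-k) k), bern_k0]
    congr 1
    refine Finset.sum_congr rfl (fun k hk => ?_)
    rw [show 2*t+2-(k+1) = 2*t+1-k by omega, bern_col]
  have h1 : ∑ k ∈ Finset.range (t+2), bern (M+1) (2*t+2-k) k
      = (∑ k ∈ Finset.range (t+1), bern (M+1) (2*t+1-k) (k+1)) + 1 := by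
    rw [Finset.sum_range_succ' (fun k => bern (M+1) (2*t+2-k) k), bern_k0]
    congr 1
    exact Finset.sum_congr rfl (fun k hk => by
      rw [show 2*t+2-(k+1) = 2*t+1-k by omega])
  rw [e2, e1, f2, h2, h1, Finset.sum_add_distrib]
  omega

lemma T_cross_odd (M t : ℕ) :
    T (M+2) (2*t+1) + bern (M+2) t t = T (M+2) (2*t) + T (M+1) (2*t+1) := by
  have e1 : T (M+2) (2*t+1) = ∑ k ∈ Finset.range (t+1), bern (M+2) (2*t+1-k) k :=
    T_as_sum _ _ _ (by omega)
  have e0 : T (M+2) (2*t) = (∑ k ∈ Finset.range t, bern (M+2) (2*t-k) k) + bern (M+2) t t := by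
    rw [T_as_sum (M+2) (2*t) (t+1) (by omega), Finset.sum_range_succ,
      show 2*t-t = t by omega]
  have f1 : T (M+1) (2*t+1) = (∑ k ∈ Finset.range t, bern (M+1) (2*t-k) (k+1)) + 1 := by
    rw [T_as_sum (M+1) (2*t+1) (t+1) (by omega),
      Finset.sum_range_succ' (fun k => bern (M+1) (2*t+1-k) k), bern_k0]
    congr 1
    exact Finset.sum_congr rfl (fun k hk => by
      rw [show 2*t+1-(k+1) = 2*t-k by omega])
  have h1 : ∑ k ∈ Finset.range (t+1), bern (M+2) (2*t+1-k) k
      = (∑ k ∈ Finset.range t, (bern (M+2) (2*t-k) k + bern (M+1) (2*t-k) (k+1))) + 1 := by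
    rw [Finset.sum_range_succ' (fun k => bern (M+2) (2*t+1-k) k), bern_k0]
    congr 1
    refine Finset.sum_congr rfl (fun k hk => ?_)
    rw [show 2*t+1-(k+1) = 2*t-k by omega, bern_col]
  rw [e1, e0, f1, h1, Finset.sum_add_distrib]
  omega

lemma bern_one (n k : ℕ) : bern 1 n k = n.choose k := rfl

lemma T_fib_pair (t : ℕ) : T 1 (2*t) = Nat.fib (2*t+1) ∧ T 1 (2*t+1) = Nat.fib (2*t+2) := by
  induction t with
  | zero => exact ⟨T_zero 1, T_one 1⟩
  | succ t ih =>
    have h1 : bern 1 t (t+1) = 0 := by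
      rw [bern_one]; exact Nat.choose_eq_zero_of_lt (by omega)
    have he := T_even 1 t
    have ho := T_odd 1 t
    have hf1 : Nat.fib (2*t+3) = Nat.fib (2*t+1) + Nat.fib (2*t+2) := by
      rw [show 2*t+3 = 2*t+1+2 by ring]; exact Nat.fib_add_two
    have hf2 : Nat.fib (2*t+4) = Nat.fib (2*t+2) + Nat.fib (2*t+3) := by
      rw [show 2*t+4 = 2*t+2+2 by ring]; exact Nat.fib_add_two
    constructor
    · rw [show 2*(t+1) = 2*t+2 by ring, show 2*t+2+1 = 2*t+3 by ring, he, h1, ih.1, ih.2]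
      omega
    · rw [show 2*(t+1)+1 = 2*t+3 by ring, show 2*(t+1)+2 = 2*t+4 by ring, ho, he, h1, ih.1, ih.2]
      omega

lemma T_fib (n : ℕ) : T 1 n = Nat.fib (n+1) := by
  rcases Nat.even_or_odd n with ⟨t, ht⟩ | ⟨t, ht⟩
  · rw [show n = 2*t by omega]; exact (T_fib_pair t).1
  · rw [show n = 2*t+1 by omega]; exact (T_fib_pair t).2

lemma descP_delta (k : ℕ) (x : ℚ) :
    (descPochhammer ℚ (k+1)).eval (x+1) - (descPochhammer ℚ (k+1)).eval x
      = (k+1) * (descPochhammer ℚ k).eval x := by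
  have h1 : (descPochhammer ℚ (k+1)).eval (x+1)
      = (x+1) * (descPochhammer ℚ k).eval x := by
    rw [descPochhammer_succ_left]
    simp [Polynomial.eval_comp]
  have h2 : (descPochhammer ℚ (k+1)).eval x
      = (descPochhammer ℚ k).eval x * (x - k) := descPochhammer_succ_eval k x
  rw [h1, h2]; ring

lemma exists_antidiff : ∀ (d : ℕ) (p : Polynomial ℚ), p.natDegree ≤ d →
    ∃ V : Polynomial ℚ, V.natDegree ≤ d + 1 ∧ V.eval 0 = 0 ∧
      ∀ x : ℚ, V.eval (x+1) - V.eval x = p.eval x := by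
  intro d
  induction d with
  | zero =>
    intro p hp
    refine ⟨Polynomial.C (p.coeff 0) * Polynomial.X, ?_, by simp, ?_⟩
    · exact le_trans (Polynomial.natDegree_C_mul_le _ _) (by simp)
    · intro x
      rw [Polynomial.eq_C_of_natDegree_le_zero hp]
      simp; ring
  | succ d ih =>
    intro p hp
    set a := p.coeff (d+1) with ha
    set q := p - Polynomial.C a * descPochhammer ℚ (d+1) with hq
    have hqd : q.natDegree ≤ d := by
      rw [Polynomial.natDegree_le_iff_coeff_eq_zero]
      intro j hj
      rw [hq, Polynomial.coeff_sub, Polynomial.coeff_C_mul]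
      rcases eq_or_lt_of_le (Nat.succ_le_of_lt hj) with h | h
      · have hm : (descPochhammer ℚ (d+1)).coeff (d+1) = 1 := by
          have := (monic_descPochhammer ℚ (d+1)).coeff_natDegree
          rwa [descPochhammer_natDegree] at this
        rw [← h, hm, ha]; ring
      · have h1 : p.coeff j = 0 :=
          Polynomial.coeff_eq_zero_of_natDegree_lt (lt_of_le_of_lt hp h)
        have h2 : (descPochhammer ℚ (d+1)).coeff j = 0 := by
          apply Polynomial.coeff_eq_zero_of_natDegree_lt
          rwa [descPochhammer_natDegree]
        rw [h1, h2]; ring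
    obtain ⟨W, hW1, hW2, hW3⟩ := ih q hqd
    refine ⟨W + Polynomial.C (a/(d+2)) * descPochhammer ℚ (d+2), ?_, ?_, ?_⟩
    · apply le_trans (Polynomial.natDegree_add_le _ _)
      apply max_le (le_trans hW1 (by omega))
      exact le_trans (Polynomial.natDegree_C_mul_le _ _) (by rw [descPochhammer_natDegree])
    · simp [hW2, descPochhammer_eval_zero]
    · intro x
      have hd := descP_delta (d+1) x
      rw [show d+1+1 = d+2 from rfl] at hd
      push_cast at hd
      have hpq : p.eval x = q.eval x + a * (descPochhammer ℚ (d+1)).eval x := by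
        rw [hq]; simp
      rw [hpq, ← hW3 x]
      simp only [Polynomial.eval_add, Polynomial.eval_mul, Polynomial.eval_C]
      have hne : (d:ℚ) + 2 ≠ 0 := by positivity
      field_simp
      linear_combination a * hd

lemma main (M : ℕ) : ∃ Q R : Polynomial ℚ,
    Q.natDegree ≤ M - 1 ∧ R.natDegree ≤ M - 2 ∧
    (M = 0 → Q = 0) ∧ (M ≤ 1 → R = 0) ∧
    (∀ n : ℕ, (T (M+1) n : ℚ) = (Nat.fib (n + (2*M+1)) : ℚ) -
      2 ^ ((n + 1) / 2) * (Q.eval (((n + 1) / 2 : ℕ) : ℚ) +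
        (-1) ^ n * R.eval (((n + 1) / 2 : ℕ) : ℚ))) ∧
    (∀ t : ℕ, Q.eval ((t:ℚ)+1) = Q.eval (t:ℚ) + R.eval ((t:ℚ)+1)) ∧
    (∀ t : ℕ, 4 * R.eval ((t:ℚ)+1) * 2^t
      = (Q.eval (t:ℚ) + R.eval (t:ℚ)) * 2^t - (bern (M+1) t (t+1) : ℚ)) := by
  induction M with
  | zero =>
    refine ⟨0, 0, by simp, by simp, fun _ => rfl, fun _ => rfl, ?_, by simp, ?_⟩
    · intro n
      simp [T_fib n]
    · intro t
      have h : bern 1 t (t+1) = 0 := by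
        rw [bern_one]; exact Nat.choose_eq_zero_of_lt (by omega)
      simp [h]
  | succ M ih =>
    obtain ⟨Q, R, hQd, hRd, hQ0, hR0, hmain, hb, ha⟩ := ih
    set R' : Polynomial ℚ := Polynomial.C (1/2 : ℚ) * (Q + R) with hR'def
    have hR'e : ∀ x : ℚ, R'.eval x = (1/2) * (Q.eval x + R.eval x) := by
      intro x; rw [hR'def]; simp
    have hR'd : R'.natDegree ≤ M - 1 := by
      refine le_trans (Polynomial.natDegree_C_mul_le _ _) ?_
      exact le_trans (Polynomial.natDegree_add_le _ _) (by omega)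
    have hR'z : M + 1 ≤ 1 → R' = 0 := by
      intro h
      rw [hR'def, hQ0 (by omega), hR0 (by omega)]
      simp
    obtain ⟨V, hV1, hV0, hV3⟩ : ∃ V : Polynomial ℚ, V.natDegree ≤ M ∧ V.eval 0 = 0 ∧
        ∀ x : ℚ, V.eval (x+1) - V.eval x = R'.eval (x+1) := by
      rcases Nat.eq_zero_or_pos M with h0 | hpos
      · exact ⟨0, by simp, by simp, fun x => by simp [hR'z (by omega)]⟩
      · obtain ⟨V, h1, h2, h3⟩ := exists_antidiff (M-1) (R'.comp (Polynomial.X + Polynomial.C 1))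
          (le_trans (Polynomial.natDegree_comp_le)
            (by rw [Polynomial.natDegree_X_add_C, mul_one]; exact hR'd))
        refine ⟨V, by omega, h2, fun x => ?_⟩
        rw [h3 x, Polynomial.eval_comp]
        simp
    set c' : ℚ := (Nat.fib (2*M+3) : ℚ) - 1 - R'.eval 0 with hc'
    set Q' : Polynomial ℚ := Polynomial.C c' + V with hQ'def
    have hQ'e : ∀ x : ℚ, Q'.eval x = c' + V.eval x := by
      intro x; rw [hQ'def]; simp
    have hb' : ∀ x : ℚ, Q'.eval (x+1) = Q'.eval x + R'.eval (x+1) := by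
      intro x
      rw [hQ'e, hQ'e]
      have := hV3 x
      linarith
    -- values of Q, R at 0 and 1
    have hval0 : Q.eval 0 + R.eval 0 = (Nat.fib (2*M+1) : ℚ) - 1 := by
      have h := hmain 0
      rw [T_zero] at h
      norm_num at h
      linarith
    have hval1 : 2 * Q.eval 0 = (Nat.fib (2*M+2) : ℚ) - 1 := by
      have h := hmain 1
      rw [T_one, show (1+1)/2 = 1 by norm_num] at h
      rw [show 1+(2*M+1) = 2*M+2 by ring] at h
      have h2 := hb 0
      norm_num at h h2
      linarith [h, h2]
    have hfib3 : (Nat.fib (2*M+3) : ℚ) = Nat.fib (2*M+1) + Nat.fib (2*M+2) := by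
      rw [show 2*M+3 = (2*M+1)+2 by ring, Nat.fib_add_two]
      push_cast; ring
    -- the star identity
    have hstar : ∀ t : ℕ, Q'.eval (t:ℚ) * 2^t
        = (R'.eval (t:ℚ) + 2*(Q.eval ((t:ℚ)+1) - R.eval ((t:ℚ)+1))) * 2^t
          + (bern (M+2) t t : ℚ) := by
      intro t
      induction t with
      | zero =>
        rw [bern_k0]
        have h2 := hb 0
        norm_num at h2 ⊢
        linarith [hQ'e 0, hV0, hc', hR'e 0, h2, hval0, hval1, hfib3]
      | succ t iht =>
        have hbident : (bern (M+2) (t+1) (t+1) : ℚ)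
            = 2 * (bern (M+2) t t : ℚ) + (bern (M+1) t (t+1) : ℚ) := by
          have h1 : bern (M+2) (t+1) (t+1) = bern (M+2) t t + bern (M+2) t (t+1) :=
            bern_pascal _ _ _
          have h2 : bern (M+2) t (t+1) = bern (M+2) t t + bern (M+1) t (t+1) :=
            bern_col _ _ _
          push_cast [h1, h2]; ring
        have hbt := hb (t+1)
        push_cast at hbt
        have hat := ha t
        have hb't := hb' (t:ℚ)
        have hr1 := hR'e ((t:ℚ))
        have hr2 := hR'e ((t:ℚ)+1)
        push_cast
        rw [pow_succ]
        rw [hbident]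
        linear_combination 2*iht - hat + (2*(2:ℚ)^t)*hb't - (4*(2:ℚ)^t)*hbt
          + (2*(2:ℚ)^t)*hr1
    -- the α identity at the new level
    have ha' : ∀ t : ℕ, 4 * R'.eval ((t:ℚ)+1) * 2^t
        = (Q'.eval (t:ℚ) + R'.eval (t:ℚ)) * 2^t - (bern (M+2) t (t+1) : ℚ) := by
      intro t
      have hcol : (bern (M+2) t (t+1) : ℚ)
          = (bern (M+2) t t : ℚ) + (bern (M+1) t (t+1) : ℚ) := by
        rw [bern_col]; push_cast; ring
      rw [hcol]
      linear_combination (-1 : ℚ) * hstar t + ha t + (4*(2:ℚ)^t) * hR'e ((t:ℚ)+1)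
        + (-2*(2:ℚ)^t) * hR'e (t:ℚ)
    -- the main formula at the new level
    have main' : ∀ n : ℕ, (T (M+2) n : ℚ) = (Nat.fib (n + (2*M+3)) : ℚ) -
        2 ^ ((n + 1) / 2) * (Q'.eval (((n + 1) / 2 : ℕ) : ℚ) +
          (-1) ^ n * R'.eval (((n + 1) / 2 : ℕ) : ℚ)) := by
      have keyOdd : ∀ t : ℕ,
          ((T (M+2) (2*t) : ℚ) = (Nat.fib (2*t + (2*M+3)) : ℚ) -
            2 ^ ((2*t + 1) / 2) * (Q'.eval (((2*t + 1) / 2 : ℕ) : ℚ) +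
              (-1) ^ (2*t) * R'.eval (((2*t + 1) / 2 : ℕ) : ℚ))) →
          ((T (M+2) (2*t+1) : ℚ) = (Nat.fib (2*t+1 + (2*M+3)) : ℚ) -
            2 ^ ((2*t+1 + 1) / 2) * (Q'.eval (((2*t+1 + 1) / 2 : ℕ) : ℚ) +
              (-1) ^ (2*t+1) * R'.eval (((2*t+1 + 1) / 2 : ℕ) : ℚ))) := by
        intro t h2t
        have hoddp : ((-1:ℚ))^(2*t+1) = -1 := Odd.neg_one_pow ⟨t, rfl⟩
        have hevenp : ((-1:ℚ))^(2*t) = 1 := Even.neg_one_pow ⟨t, by ring⟩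
        have hrelQ : (T (M+2) (2*t+1) : ℚ) + (bern (M+2) t t : ℚ)
            = (T (M+2) (2*t) : ℚ) + (T (M+1) (2*t+1) : ℚ) := by
          exact_mod_cast congrArg (Nat.cast : ℕ → ℚ) (T_cross_odd M t)
        have hm := hmain (2*t+1)
        rw [show (2*t+1+1)/2 = t+1 by omega, show 2*t+1 + (2*M+1) = 2*t+2*M+2 by ring,
          hoddp] at hm
        rw [show (2*t+1)/2 = t by omega, show 2*t + (2*M+3) = 2*t+2*M+3 by ring,
          hevenp] at h2t
        rw [show (2*t+1+1)/2 = t+1 by omega, show 2*t+1 + (2*M+3) = 2*t+2*M+4 by ring,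
          hoddp]
        have hf : (Nat.fib (2*t+2*M+4) : ℚ)
            = (Nat.fib (2*t+2*M+2) : ℚ) + (Nat.fib (2*t+2*M+3) : ℚ) := by
          rw [show 2*t+2*M+4 = (2*t+2*M+2)+2 by ring, Nat.fib_add_two]
          push_cast
          rw [show 2*t+2*M+2+1 = 2*t+2*M+3 by ring]
        have hb't := hb' ((t : ℚ))
        push_cast at h2t hm ⊢
        linear_combination hrelQ + h2t + hm + hstar t - hf + (2*(2:ℚ)^t) * hb't
      have keyEven : ∀ t : ℕ,
          ((T (M+2) (2*t+1) : ℚ) = (Nat.fib (2*t+1 + (2*M+3)) : ℚ) -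
            2 ^ ((2*t+1 + 1) / 2) * (Q'.eval (((2*t+1 + 1) / 2 : ℕ) : ℚ) +
              (-1) ^ (2*t+1) * R'.eval (((2*t+1 + 1) / 2 : ℕ) : ℚ))) →
          ((T (M+2) (2*t+2) : ℚ) = (Nat.fib (2*t+2 + (2*M+3)) : ℚ) -
            2 ^ ((2*t+2 + 1) / 2) * (Q'.eval (((2*t+2 + 1) / 2 : ℕ) : ℚ) +
              (-1) ^ (2*t+2) * R'.eval (((2*t+2 + 1) / 2 : ℕ) : ℚ))) := by
        intro t h2t1
        have hoddp : ((-1:ℚ))^(2*t+1) = -1 := Odd.neg_one_pow ⟨t, rfl⟩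
        have hevenp2 : ((-1:ℚ))^(2*t+2) = 1 := Even.neg_one_pow ⟨t+1, by ring⟩
        have hrelQ : (T (M+2) (2*t+2) : ℚ)
            = (T (M+1) (2*t+2) : ℚ) + (T (M+2) (2*t+1) : ℚ) := by
          exact_mod_cast congrArg (Nat.cast : ℕ → ℚ) (T_cross_even M t)
        have hm := hmain (2*t+2)
        rw [show (2*t+2+1)/2 = t+1 by omega, show 2*t+2 + (2*M+1) = 2*t+2*M+3 by ring,
          hevenp2] at hm
        rw [show (2*t+1+1)/2 = t+1 by omega, show 2*t+1 + (2*M+3) = 2*t+2*M+4 by ring,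
          hoddp] at h2t1
        rw [show (2*t+2+1)/2 = t+1 by omega, show 2*t+2 + (2*M+3) = 2*t+2*M+5 by ring,
          hevenp2]
        have hf : (Nat.fib (2*t+2*M+5) : ℚ)
            = (Nat.fib (2*t+2*M+3) : ℚ) + (Nat.fib (2*t+2*M+4) : ℚ) := by
          rw [show 2*t+2*M+5 = (2*t+2*M+3)+2 by ring, Nat.fib_add_two]
          push_cast
          rw [show 2*t+2*M+3+1 = 2*t+2*M+4 by ring]
        have hr2 := hR'e ((t:ℚ)+1)
        push_cast at h2t1 hm ⊢
        linear_combination hrelQ + hm + h2t1 - hf + (2*(2:ℚ)^(t+1)) * hr2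
      intro n
      induction n with
      | zero =>
        rw [T_zero]
        norm_num
        linarith [hQ'e 0, hV0, hc']
      | succ n ihn =>
        rcases Nat.even_or_odd n with ⟨t, ht⟩ | ⟨t, ht⟩
        · obtain rfl : n = 2*t := by omega
          exact keyOdd t ihn
        · obtain rfl : n = 2*t+1 := by omega
          exact keyEven t ihn
    refine ⟨Q', R', ?_, hR'd, fun h => absurd h (by omega), hR'z, main', fun t => hb' (t:ℚ), ha'⟩
    exact le_trans (Polynomial.natDegree_add_le _ _) (max_le (by simp) hV1)

theorem theoremTm (m : ℕ) (hm : 1 ≤ m) :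
    ∃ Q R : Polynomial ℚ, Q.natDegree ≤ m - 2 ∧ R.natDegree ≤ m - 3 ∧
      ∀ n : ℕ,
        (T m n : ℚ) =
          (Nat.fib (n + 2 * m - 1) : ℚ) -
            2 ^ ((n + 1) / 2) *
              (Q.eval (((n + 1) / 2 : ℕ) : ℚ) +
                (-1) ^ n * R.eval (((n + 1) / 2 : ℕ) : ℚ)) := by
  obtain ⟨M, rfl⟩ : ∃ M, m = M + 1 := ⟨m - 1, by omega⟩
  obtain ⟨Q, R, h1, h2, -, -, hmain, -, -⟩ := main M
  refine ⟨Q, R, h1, h2, fun n => ?_⟩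
  rw [show n + 2*(M+1) - 1 = n + (2*M+1) by omega]
  exact hmain n
end
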